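/- arXiv:1503.02603 — 3 statements merged into one kernel-verified Lean document; each statement's English description precedes it below -/
import Mathlib

section
/- The function h̄ is strictly increasing on [0, 𝐱]: if 0 ≤ w₁ < w₂ ≤ 𝐱 then h̄(w₁) < h̄(w₂). -/
/-!
Scaling a feasible allocation `ξ` by `t ∈ [0, 1]` keeps it feasible and scales both `θ · ξ` and
`h · ξ` by `t`, so `h̄(t w) ≤ t h̄(w)`. With `c = minᵢ hᵢ / θᵢ > 0` every feasible `ξ` has
`h · ξ ≥ c (θ · ξ)`, so `h̄(w) ≥ c w > 0` for feasible `w > 0`. Taking `t = w₁ / w₂ < 1` gives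
`h̄(w₁) ≤ t h̄(w₂) < h̄(w₂)`; `w₂ ≤ b θₘ` is feasible through the allocation `(w₂ / θₘ) eₘ`.
-/

open Finset
open scoped Pointwise

section

variable {ι : Type*} [Fintype ι]

def budgetSet (θ : ι → ℝ) (b w : ℝ) : Set (ι → ℝ) :=
  {ξ | ((∀ i, 0 ≤ ξ i) ∧ ∑ i, ξ i ≤ b) ∧ ∑ i, θ i * ξ i = w}

def costSet (h θ : ι → ℝ) (b w : ℝ) : Set ℝ :=
  (fun ξ => ∑ i, h i * ξ i) '' budgetSet θ b w

/-- Since `sInf ∅ = 0`, this is the paper's `h̄(w)` only for feasible `w`. -/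
noncomputable def hbar (h θ : ι → ℝ) (b w : ℝ) : ℝ :=
  sInf (costSet h θ b w)

variable {h θ : ι → ℝ} {b w : ℝ}

theorem single_mem_budgetSet [DecidableEq ι] {m : ι} (hθ : 0 < θ m) (hw : 0 ≤ w)
    (hwb : w ≤ b * θ m) : Pi.single m (w / θ m) ∈ budgetSet θ b w := by
  refine ⟨⟨fun i => ?_, ?_⟩, ?_⟩
  · rcases eq_or_ne i m with rfl | him
    · simpa using div_nonneg hw hθ.le
    · simp [him]
  · simpa using (div_le_iff₀ hθ).2 hwb
  · simp [Pi.single_apply, mul_div_cancel₀ _ hθ.ne']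

theorem smul_mem_budgetSet {t : ℝ} {ξ : ι → ℝ} (ht₀ : 0 ≤ t) (ht₁ : t ≤ 1)
    (hξ : ξ ∈ budgetSet θ b w) : t • ξ ∈ budgetSet θ b (t * w) := by
  obtain ⟨⟨hξ₀, hξb⟩, hξw⟩ := hξ
  refine ⟨⟨fun i => mul_nonneg ht₀ (hξ₀ i), ?_⟩, ?_⟩
  · calc ∑ i, (t • ξ) i = t * ∑ i, ξ i := by simp [mul_sum]
      _ ≤ ∑ i, ξ i := mul_le_of_le_one_left (sum_nonneg fun i _ => hξ₀ i) ht₁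
      _ ≤ b := hξb
  · simp only [Pi.smul_apply, smul_eq_mul, ← hξw, mul_sum]
    exact sum_congr rfl fun i _ => by ring

theorem smul_costSet_subset {t : ℝ} (ht₀ : 0 ≤ t) (ht₁ : t ≤ 1) :
    t • costSet h θ b w ⊆ costSet h θ b (t * w) := by
  rintro _ ⟨_, ⟨ξ, hξ, rfl⟩, rfl⟩
  refine ⟨t • ξ, smul_mem_budgetSet ht₀ ht₁ hξ, ?_⟩
  simp only [Pi.smul_apply, smul_eq_mul, mul_sum]
  exact sum_congr rfl fun i _ => by ring

theorem mul_le_of_mem_costSet {c x : ℝ} (hc : ∀ i, c * θ i ≤ h i)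
    (hx : x ∈ costSet h θ b w) : c * w ≤ x := by
  obtain ⟨ξ, ⟨⟨hξ₀, -⟩, hξw⟩, rfl⟩ := hx
  calc c * w = ∑ i, c * θ i * ξ i := by simp [← hξw, mul_sum, mul_assoc]
    _ ≤ ∑ i, h i * ξ i := sum_le_sum fun i _ => mul_le_mul_of_nonneg_right (hc i) (hξ₀ i)

theorem costSet_bddBelow (hh : ∀ i, 0 ≤ h i) : BddBelow (costSet h θ b w) :=
  ⟨0, fun _ hx => by simpa using mul_le_of_mem_costSet (c := 0) (by simpa using hh) hx⟩

theorem exists_pos_mul_le [Nonempty ι] (hh : ∀ i, 0 < h i) (hθ : ∀ i, 0 < θ i) :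
    ∃ c > 0, ∀ i, c * θ i ≤ h i := by
  obtain ⟨j, hj⟩ := Finite.exists_min fun i => h i / θ i
  exact ⟨h j / θ j, div_pos (hh j) (hθ j), fun i => (le_div_iff₀ (hθ i)).1 (hj i)⟩

theorem hbar_pos [Nonempty ι] (hh : ∀ i, 0 < h i) (hθ : ∀ i, 0 < θ i)
    (hne : (costSet h θ b w).Nonempty) (hw : 0 < w) : 0 < hbar h θ b w := by
  obtain ⟨c, hc₀, hc⟩ := exists_pos_mul_le hh hθ
  exact (mul_pos hc₀ hw).trans_le (le_csInf hne fun _ => mul_le_of_mem_costSet hc)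

theorem hbar_mul_le (hh : ∀ i, 0 ≤ h i) {t : ℝ} (ht₀ : 0 ≤ t) (ht₁ : t ≤ 1)
    (hne : (costSet h θ b w).Nonempty) : hbar h θ b (t * w) ≤ t * hbar h θ b w := by
  have := csInf_le_csInf (costSet_bddBelow hh) hne.smul_set (smul_costSet_subset ht₀ ht₁)
  rwa [Real.sInf_smul_of_nonneg ht₀] at this

end

theorem hbar_strictMono_general (I : ℕ) (h θ : Fin I → ℝ)
    (hh : ∀ i, 0 < h i) (hθ : ∀ i, 0 < θ i) (b : ℝ)
    (m : Fin I) :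
    ∀ w₁ w₂ : ℝ, 0 ≤ w₁ → w₁ < w₂ → w₂ ≤ b * θ m →
      sInf ((fun ξ => ∑ i, h i * ξ i) ''
          {ξ : Fin I → ℝ | ((∀ i, 0 ≤ ξ i) ∧ ∑ i, ξ i ≤ b) ∧ ∑ i, θ i * ξ i = w₁}) <
      sInf ((fun ξ => ∑ i, h i * ξ i) ''
          {ξ : Fin I → ℝ | ((∀ i, 0 ≤ ξ i) ∧ ∑ i, ξ i ≤ b) ∧ ∑ i, θ i * ξ i = w₂}) := by
  intro w₁ w₂ hw₁ hlt hw₂b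
  have : Nonempty (Fin I) := ⟨m⟩
  have hw₂ : 0 < w₂ := hw₁.trans_lt hlt
  have hne : (costSet h θ b w₂).Nonempty :=
    ⟨_, _, single_mem_budgetSet (hθ m) hw₂.le hw₂b, rfl⟩
  change hbar h θ b w₁ < hbar h θ b w₂
  calc hbar h θ b w₁ = hbar h θ b (w₁ / w₂ * w₂) := by rw [div_mul_cancel₀ _ hw₂.ne']
    _ ≤ w₁ / w₂ * hbar h θ b w₂ :=
      hbar_mul_le (fun i => (hh i).le) (by positivity) ((div_le_one hw₂).2 hlt.le) hne
    _ < hbar h θ b w₂ :=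
      mul_lt_of_lt_one_left (hbar_pos hh hθ hne hw₂) ((div_lt_one hw₂).2 hlt)

/-- h̄ is strictly increasing on [0, 𝐱]. -/
theorem hbar_strictMono (I : ℕ) (hI : 1 ≤ I) (h θ : Fin I → ℝ)
    (hh : ∀ i, 0 < h i) (hθ : ∀ i, 0 < θ i) (b : ℝ) (hb : 0 < b)
    (m : Fin I) (hm : ∀ i, θ i ≤ θ m) :
    ∀ w₁ w₂ : ℝ, 0 ≤ w₁ → w₁ < w₂ → w₂ ≤ b * θ m →
      sInf ((fun ξ => ∑ i, h i * ξ i) ''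
          {ξ : Fin I → ℝ | ((∀ i, 0 ≤ ξ i) ∧ ∑ i, ξ i ≤ b) ∧ ∑ i, θ i * ξ i = w₁}) <
      sInf ((fun ξ => ∑ i, h i * ξ i) ''
          {ξ : Fin I → ℝ | ((∀ i, 0 ≤ ξ i) ∧ ∑ i, ξ i ≤ b) ∧ ∑ i, θ i * ξ i = w₂}) :=
  hbar_strictMono_general I h θ hh hθ b m
end

section
/- Uniqueness of the two-class representation: suppose 0 < θ₁ < θ₂ < ⋯ < θ_J and a > 0. For every w ∈ [0, θ_J a) there exists a unique triple (j, χ_l, χ_h) with j ∈ {1,…,J}, χ_l, χ_h ≥ 0, χ_l + χ_h ∈ [0, a), and w = θ_{j-1}χ_l + θ_jχ_h (with θ₀ := 0 and the convention χ_l = 0 when j = 1). -/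
/-!
For a fixed class `j`, the constraints say exactly that
`w = θ_{j-1} a + (θ_j - θ_{j-1}) χ_h` with `0 ≤ χ_h < a` (for `j = 1` because `θ₀ = 0`), i.e. that
`w` lies in `[θ_{j-1} a, θ_j a)` and `χ_h` is its interpolation parameter there; `χ_l` is then
forced. Since `θ` increases, these intervals for `1 ≤ j ≤ J` partition `[0, θ_J a)`.
-/

open Set

theorem MonotoneOn.eq_of_mem_Ico_succ {β : Type*} [Preorder β] {f : ℕ → β} {n i k : ℕ}
    (hf : MonotoneOn f (Iic n)) (hi : i < n) (hk : k < n) {x : β}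
    (hxi : x ∈ Ico (f i) (f (i + 1))) (hxk : x ∈ Ico (f k) (f (k + 1))) : i = k := by
  have key : ∀ {i k : ℕ}, k < n → x ∈ Ico (f i) (f (i + 1)) → x ∈ Ico (f k) (f (k + 1)) →
      ¬ i < k := fun hk hxi hxk hik =>
    (hxi.2.trans_le (hf (mem_Iic.2 (by omega)) (mem_Iic.2 (by omega)) hik)).not_ge hxk.1
  rcases lt_trichotomy i k with hik | rfl | hki
  · exact absurd hik (key hk hxi hxk)
  · rfl
  · exact absurd hki (key hi hxk hxi)

theorem mem_Ico_and_eq_div_iff {a c c' h w : ℝ} (hc : c < c') :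
    (0 ≤ h ∧ h < a ∧ w = c * a + (c' - c) * h) ↔
      (w ∈ Ico (c * a) (c' * a) ∧ h = (w - c * a) / (c' - c)) := by
  have hd : 0 < c' - c := sub_pos.mpr hc
  constructor
  · rintro ⟨h0, ha, rfl⟩
    exact ⟨⟨by nlinarith, by nlinarith⟩, by field_simp; ring⟩
  · rintro ⟨⟨hlo, hhi⟩, rfl⟩
    exact ⟨div_nonneg (by linarith) hd.le, (div_lt_iff₀ hd).2 (by linarith), by field_simp; ring⟩

theorem two_class_representation_iff {θ : ℕ → ℝ} (hθ0 : θ 0 = 0) {i : ℕ}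
    (hθi : θ i < θ (i + 1)) {a l h w : ℝ} :
    (0 ≤ l ∧ 0 ≤ h ∧ h < a ∧ l + h ≤ a ∧ w = θ i * l + θ (i + 1) * h ∧
      (i + 1 = 1 → l = 0) ∧ (2 ≤ i + 1 → l + h = a)) ↔
    (w ∈ Ico (θ i * a) (θ (i + 1) * a) ∧ h = (w - θ i * a) / (θ (i + 1) - θ i) ∧
      l = if i = 0 then 0 else a - h) := by
  conv_rhs => rw [← and_assoc, ← mem_Ico_and_eq_div_iff hθi]
  rcases Nat.eq_zero_or_pos i with rfl | hi
  · simp only [hθ0, if_true]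
    constructor
    · rintro ⟨-, h0, ha, -, hw, hl, -⟩
      obtain rfl := hl trivial
      exact ⟨⟨h0, ha, by linarith⟩, rfl⟩
    · rintro ⟨⟨h0, ha, hw⟩, rfl⟩
      exact ⟨le_rfl, h0, ha, by linarith, by linarith, fun _ => rfl, by omega⟩
  · simp only [hi.ne', if_false]
    constructor
    · rintro ⟨-, h0, ha, -, hw, -, hsum⟩
      obtain rfl : l = a - h := by linarith [hsum (by omega)]
      exact ⟨⟨h0, ha, by linarith⟩, rfl⟩
    · rintro ⟨⟨h0, ha, hw⟩, rfl⟩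
      exact ⟨by linarith, h0, ha, by linarith, by linarith, by omega, fun _ => by ring⟩

theorem two_class_representation_unique_general (J : ℕ) (θ : ℕ → ℝ)
    (hθ0 : θ 0 = 0) (hθmono : ∀ i < J, θ i < θ (i + 1))
    (a : ℝ) (ha : 0 < a) (w : ℝ) (hw0 : 0 ≤ w) (hwx : w < θ J * a) :
    ∃! t : ℕ × ℝ × ℝ,
      (1 ≤ t.1 ∧ t.1 ≤ J) ∧ 0 ≤ t.2.1 ∧ 0 ≤ t.2.2 ∧ t.2.2 < a ∧
      t.2.1 + t.2.2 ≤ a ∧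
      w = θ (t.1 - 1) * t.2.1 + θ t.1 * t.2.2 ∧
      (t.1 = 1 → t.2.1 = 0) ∧ (2 ≤ t.1 → t.2.1 + t.2.2 = a) := by
  have hmono : MonotoneOn (fun i => θ i * a) (Iic J) := fun i hi k hk hik =>
    mul_le_mul_of_nonneg_right ((strictMonoOn_Iic_of_lt_succ hθmono).monotoneOn hi hk hik) ha.le
  obtain ⟨i, hiJ, hwi⟩ : ∃ i < J, w ∈ Ico (θ i * a) (θ (i + 1) * a) := by
    have hw : w ∈ Ico (θ 0 * a) (θ J * a) := ⟨by rwa [hθ0, zero_mul], hwx⟩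
    simpa only [mem_iUnion, Finset.mem_range, exists_prop] using
      Ico_subset_biUnion_Ico J (fun i => θ i * a) hw
  set h := (w - θ i * a) / (θ (i + 1) - θ i)
  refine ⟨(i + 1, if i = 0 then 0 else a - h, h), ?_, ?_⟩
  · refine ⟨⟨by omega, hiJ⟩, ?_⟩
    simp only [Nat.add_sub_cancel]
    exact (two_class_representation_iff hθ0 (hθmono i hiJ)).2 ⟨hwi, rfl, rfl⟩
  · rintro ⟨j, l, h'⟩ ⟨⟨hj1, hjJ⟩, hrep⟩
    obtain ⟨k, rfl⟩ : ∃ k, j = k + 1 := ⟨j - 1, by omega⟩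
    simp only [Nat.add_sub_cancel] at hrep
    obtain ⟨hwk, rfl, rfl⟩ := (two_class_representation_iff hθ0 (hθmono k hjJ)).1 hrep
    obtain rfl := hmono.eq_of_mem_Ico_succ hjJ hiJ hwk hwi
    rfl

/-- Uniqueness of the two-class representation w = θ_{j-1}χ_l + θ_jχ_h
(with θ₀ = 0, χ_l = 0 when j = 1, full buffer χ_l + χ_h = a when j ≥ 2). -/
theorem two_class_representation_unique (J : ℕ) (hJ : 1 ≤ J) (θ : ℕ → ℝ)
    (hθ0 : θ 0 = 0) (hθmono : ∀ i < J, θ i < θ (i + 1))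
    (a : ℝ) (ha : 0 < a) (w : ℝ) (hw0 : 0 ≤ w) (hwx : w < θ J * a) :
    ∃! t : ℕ × ℝ × ℝ,
      (1 ≤ t.1 ∧ t.1 ≤ J) ∧ 0 ≤ t.2.1 ∧ 0 ≤ t.2.2 ∧ t.2.2 < a ∧
      t.2.1 + t.2.2 ≤ a ∧
      w = θ (t.1 - 1) * t.2.1 + θ t.1 * t.2.2 ∧
      (t.1 = 1 → t.2.1 = 0) ∧ (2 ≤ t.1 → t.2.1 + t.2.2 = a) :=
  two_class_representation_unique_general J θ hθ0 hθmono a ha w hw0 hwx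
end

section
/- For the one-dimensional Skorohod problem on [0, κ] (κ > 0): given continuous ψ with ψ(0) ∈ [0,κ], if (φ, η₁, η₂) and (φ', η₁', η₂') both satisfy φ = ψ + η₁ - η₂ ∈ [0,κ], with η₁, η₂ nondecreasing, starting at 0, η₁ increasing only when φ = 0 and η₂ increasing only when φ = κ (and similarly for the primed triple), then φ = φ', η₁ = η₁', η₂ = η₂'. -/
/-!
If `φ > φ'` on an interval, then `η₁` and `η₂'` are constant there, so
`φ - φ' = (η₁ - η₁') - (η₂ - η₂')` is nonincreasing on it; since `φ - φ'` starts at `0`, it can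
never become positive. By symmetry `φ = φ'`, and then `η₁ - η₁' = η₂ - η₂'`. Near any point `φ`
stays either positive or below `κ`, so this continuous difference is locally constant to the right
of every point, hence identically `0`.
-/

open Set Filter

/-- The complementarity conditions `∫ 1_{φ > 0} dη₁ = 0` and `∫ 1_{φ < κ} dη₂ = 0` appear as
constancy of `η₁` (resp. `η₂`) on intervals where `φ > 0` (resp. `φ < κ`). -/
structure IsSkorohodSolution (κ : ℝ) (ψ φ η₁ η₂ : ℝ → ℝ) : Prop where
  eq_add_sub : ∀ t ≥ (0:ℝ), φ t = ψ t + η₁ t - η₂ t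
  mem_Icc : ∀ t ≥ (0:ℝ), φ t ∈ Icc 0 κ
  continuousOn_η₁ : ContinuousOn η₁ (Ici 0)
  continuousOn_η₂ : ContinuousOn η₂ (Ici 0)
  monotoneOn_η₁ : MonotoneOn η₁ (Ici 0)
  monotoneOn_η₂ : MonotoneOn η₂ (Ici 0)
  η₁_zero : η₁ 0 = 0
  η₂_zero : η₂ 0 = 0
  η₁_eq_of_pos : ∀ s t : ℝ, 0 ≤ s → s ≤ t → (∀ u ∈ Icc s t, 0 < φ u) → η₁ s = η₁ t
  η₂_eq_of_lt : ∀ s t : ℝ, 0 ≤ s → s ≤ t → (∀ u ∈ Icc s t, φ u < κ) → η₂ s = η₂ t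

theorem ContinuousOn.exists_last_eq {f : ℝ → ℝ} {a b c : ℝ} (hab : a ≤ b)
    (hf : ContinuousOn f (Icc a b)) (ha : f a ≤ c) (hb : c < f b) :
    ∃ s ∈ Ico a b, f s = c ∧ ∀ u ∈ Ioc s b, c < f u := by
  set S := Icc a b ∩ f ⁻¹' Iic c
  have haS : a ∈ S := ⟨left_mem_Icc.2 hab, ha⟩
  have hbdd : BddAbove S := ⟨b, fun x hx => hx.1.2⟩
  have hsS : sSup S ∈ S :=
    (hf.preimage_isClosed_of_isClosed isClosed_Icc isClosed_Iic).csSup_mem ⟨a, haS⟩ hbdd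
  set s := sSup S
  have hgt : ∀ u ∈ Ioc s b, c < f u := fun u hu => by
    by_contra! hle
    exact hu.1.not_ge (le_csSup hbdd ⟨⟨(le_csSup hbdd haS).trans hu.1.le, hu.2⟩, hle⟩)
  have hsb : s < b := hsS.1.2.lt_of_ne fun h => hb.not_ge (h ▸ hsS.2)
  have hs_mem : s ∈ closure (Ioc s b) := by
    rw [closure_Ioc hsb.ne]; exact left_mem_Icc.2 hsb.le
  refine ⟨s, ⟨hsS.1.1, hsb⟩, le_antisymm hsS.2 ?_, hgt⟩
  exact continuousWithinAt_const.closure_le hs_mem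
    ((hf s hsS.1).mono fun u hu => ⟨hsS.1.1.trans hu.1.le, hu.2⟩) fun u hu => (hgt u hu).le

theorem ContinuousOn.le_of_forall_le_of_gt {f : ℝ → ℝ} {a b c : ℝ} (hab : a ≤ b)
    (hf : ContinuousOn f (Icc a b)) (ha : f a ≤ c)
    (h : ∀ v ∈ Icc a b, (∀ u ∈ Icc v b, c < f u) → f b ≤ f v) : f b ≤ c := by
  by_contra! hb
  obtain ⟨s, hs, hfs, hgt⟩ := hf.exists_last_eq hab ha hb
  have hsub : Ioc s b ⊆ Icc a b := fun u hu => ⟨hs.1.trans hu.1.le, hu.2⟩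
  have hb_le : ∀ v ∈ Ioc s b, f b ≤ f v := fun v hv =>
    h v (hsub hv) fun u hu => hgt u ⟨hv.1.trans_le hu.1, hu.2⟩
  have hs_mem : s ∈ closure (Ioc s b) := by
    rw [closure_Ioc hs.2.ne]; exact left_mem_Icc.2 hs.2.le
  have : f b ≤ f s := continuousWithinAt_const.closure_le hs_mem
    ((hf s (Ico_subset_Icc_self hs)).mono hsub) hb_le
  linarith

theorem exists_Icc_pos_or_lt {φ : ℝ → ℝ} {κ x : ℝ} (hκ : 0 < κ)
    (hφ : ContinuousWithinAt φ (Ici x) x) :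
    ∃ u > x, (∀ v ∈ Icc x u, 0 < φ v) ∨ ∀ v ∈ Icc x u, φ v < κ := by
  rcases lt_or_ge 0 (φ x) with hpos | hnonpos
  · obtain ⟨u, hu, hsub⟩ := mem_nhdsGE_iff_exists_Icc_subset.1 (hφ (Ioi_mem_nhds hpos))
    exact ⟨u, hu, Or.inl hsub⟩
  · obtain ⟨u, hu, hsub⟩ :=
      mem_nhdsGE_iff_exists_Icc_subset.1 (hφ (Iio_mem_nhds (hnonpos.trans_lt hκ)))
    exact ⟨u, hu, Or.inr hsub⟩

namespace IsSkorohodSolution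

variable {κ : ℝ} {ψ φ η₁ η₂ φ' η₁' η₂' : ℝ → ℝ}

theorem continuousOn (S : IsSkorohodSolution κ ψ φ η₁ η₂) (hψ : ContinuousOn ψ (Ici 0)) :
    ContinuousOn φ (Ici 0) :=
  ((hψ.add S.continuousOn_η₁).sub S.continuousOn_η₂).congr fun t ht => S.eq_add_sub t ht

theorem le (S : IsSkorohodSolution κ ψ φ η₁ η₂) (S' : IsSkorohodSolution κ ψ φ' η₁' η₂')
    (hφ : ContinuousOn φ (Ici 0)) (hφ' : ContinuousOn φ' (Ici 0)) :
    ∀ t ≥ (0:ℝ), φ t ≤ φ' t := by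
  intro t ht
  have hdiff : ContinuousOn (fun u => φ u - φ' u) (Icc 0 t) :=
    (hφ.sub hφ').mono Icc_subset_Ici_self
  have hzero : φ 0 - φ' 0 ≤ 0 := by
    simp [S.eq_add_sub 0 le_rfl, S'.eq_add_sub 0 le_rfl, S.η₁_zero, S.η₂_zero, S'.η₁_zero,
      S'.η₂_zero]
  suffices φ t - φ' t ≤ 0 by linarith
  refine ContinuousOn.le_of_forall_le_of_gt (f := fun u => φ u - φ' u) ht hdiff hzero
    fun v hv hgt => ?_
  have hgt' : ∀ u ∈ Icc v t, φ' u < φ u := fun u hu => sub_pos.1 (hgt u hu)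
  have hη₁ : η₁ v = η₁ t := S.η₁_eq_of_pos v t hv.1 hv.2 fun u hu =>
    (S'.mem_Icc u (hv.1.trans hu.1)).1.trans_lt (hgt' u hu)
  have hη₂' : η₂' v = η₂' t := S'.η₂_eq_of_lt v t hv.1 hv.2 fun u hu =>
    (hgt' u hu).trans_le (S.mem_Icc u (hv.1.trans hu.1)).2
  have hη₂ : η₂ v ≤ η₂ t := S.monotoneOn_η₂ hv.1 ht hv.2
  have hη₁' : η₁' v ≤ η₁' t := S'.monotoneOn_η₁ hv.1 ht hv.2
  linarith [S.eq_add_sub v hv.1, S.eq_add_sub t ht, S'.eq_add_sub v hv.1, S'.eq_add_sub t ht]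

theorem η₁_eqOn (S : IsSkorohodSolution κ ψ φ η₁ η₂) (S' : IsSkorohodSolution κ ψ φ' η₁' η₂')
    (hκ : 0 < κ) (hφ : ContinuousOn φ (Ici 0)) (hφφ' : EqOn φ φ' (Ici 0)) :
    EqOn η₁ η₁' (Ici 0) := by
  intro t ht
  set Z := (fun u => η₁ u - η₁' u) ⁻¹' {0}
  have hZ : IsClosed (Z ∩ Icc 0 t) := by
    rw [inter_comm]
    exact ((S.continuousOn_η₁.sub S'.continuousOn_η₁).mono Icc_subset_Ici_self)
      |>.preimage_isClosed_of_isClosed isClosed_Icc isClosed_singleton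
  have h0 : (0:ℝ) ∈ Z := by simp [Z, S.η₁_zero, S'.η₁_zero]
  suffices Icc 0 t ⊆ Z from sub_eq_zero.1 (this ⟨ht, le_rfl⟩)
  refine hZ.Icc_subset_of_forall_mem_nhdsWithin h0 fun x ⟨hxZ, hx0, _⟩ => ?_
  obtain ⟨u, hxu, hcase⟩ := exists_Icc_pos_or_lt hκ ((hφ x hx0).mono (Ici_subset_Ici.2 hx0))
  refine mem_of_superset (Icc_mem_nhdsGT hxu) fun v hv => ?_
  have hv0 : 0 ≤ v := hx0.trans hv.1
  have hsub : Icc x v ⊆ Icc x u := Icc_subset_Icc_right hv.2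
  simp only [Z, mem_preimage, mem_singleton_iff] at hxZ ⊢
  rcases hcase with hpos | hlt
  · have h₁ := S.η₁_eq_of_pos x v hx0 hv.1 fun w hw => hpos w (hsub hw)
    have h₁' := S'.η₁_eq_of_pos x v hx0 hv.1 fun w hw =>
      hφφ' (hx0.trans hw.1) ▸ hpos w (hsub hw)
    linarith
  · -- `φ = φ'` makes `η₁ - η₁' = η₂ - η₂'`
    have h₂ := S.η₂_eq_of_lt x v hx0 hv.1 fun w hw => hlt w (hsub hw)
    have h₂' := S'.η₂_eq_of_lt x v hx0 hv.1 fun w hw =>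
      hφφ' (hx0.trans hw.1) ▸ hlt w (hsub hw)
    linarith [S.eq_add_sub x hx0, S'.eq_add_sub x hx0, S.eq_add_sub v hv0, S'.eq_add_sub v hv0,
      hφφ' hx0, hφφ' hv0]

end IsSkorohodSolution

theorem skorohod_unique_general (κ : ℝ) (hκ : 0 < κ) (ψ φ φ' η₁ η₂ η₁' η₂' : ℝ → ℝ)
    (hψc : ContinuousOn ψ (Set.Ici 0))
    -- first solution
    (hφ : ∀ t ≥ (0:ℝ), φ t = ψ t + η₁ t - η₂ t)
    (hφrange : ∀ t ≥ (0:ℝ), φ t ∈ Set.Icc 0 κ)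
    (hη₁c : ContinuousOn η₁ (Set.Ici 0)) (hη₂c : ContinuousOn η₂ (Set.Ici 0))
    (hη₁m : MonotoneOn η₁ (Set.Ici 0)) (hη₂m : MonotoneOn η₂ (Set.Ici 0))
    (hη₁0 : η₁ 0 = 0) (hη₂0 : η₂ 0 = 0)
    (hη₁supp : ∀ s t : ℝ, 0 ≤ s → s ≤ t → (∀ u ∈ Set.Icc s t, 0 < φ u) → η₁ s = η₁ t)
    (hη₂supp : ∀ s t : ℝ, 0 ≤ s → s ≤ t → (∀ u ∈ Set.Icc s t, φ u < κ) → η₂ s = η₂ t)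
    -- second solution
    (hφ' : ∀ t ≥ (0:ℝ), φ' t = ψ t + η₁' t - η₂' t)
    (hφ'range : ∀ t ≥ (0:ℝ), φ' t ∈ Set.Icc 0 κ)
    (hη₁'c : ContinuousOn η₁' (Set.Ici 0)) (hη₂'c : ContinuousOn η₂' (Set.Ici 0))
    (hη₁'m : MonotoneOn η₁' (Set.Ici 0)) (hη₂'m : MonotoneOn η₂' (Set.Ici 0))
    (hη₁'0 : η₁' 0 = 0) (hη₂'0 : η₂' 0 = 0)
    (hη₁'supp : ∀ s t : ℝ, 0 ≤ s → s ≤ t → (∀ u ∈ Set.Icc s t, 0 < φ' u) → η₁' s = η₁' t)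
    (hη₂'supp : ∀ s t : ℝ, 0 ≤ s → s ≤ t → (∀ u ∈ Set.Icc s t, φ' u < κ) → η₂' s = η₂' t) :
    ∀ t ≥ (0:ℝ), φ t = φ' t ∧ η₁ t = η₁' t ∧ η₂ t = η₂' t := by
  have S : IsSkorohodSolution κ ψ φ η₁ η₂ :=
    ⟨hφ, hφrange, hη₁c, hη₂c, hη₁m, hη₂m, hη₁0, hη₂0, hη₁supp, hη₂supp⟩
  have S' : IsSkorohodSolution κ ψ φ' η₁' η₂' :=
    ⟨hφ', hφ'range, hη₁'c, hη₂'c, hη₁'m, hη₂'m, hη₁'0, hη₂'0, hη₁'supp, hη₂'supp⟩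
  have hφc := S.continuousOn hψc
  have hφc' := S'.continuousOn hψc
  have hφφ' : EqOn φ φ' (Ici 0) := fun t ht =>
    le_antisymm (S.le S' hφc hφc' t ht) (S'.le S hφc' hφc t ht)
  intro t ht
  have hη₁ : η₁ t = η₁' t := S.η₁_eqOn S' hκ hφc hφφ' ht
  refine ⟨hφφ' ht, hη₁, ?_⟩
  linarith [hφ t ht, hφ' t ht, hφφ' ht]

/-- Uniqueness of solutions to the one-dimensional Skorohod problem on [0, κ]. -/
theorem skorohod_unique (κ : ℝ) (hκ : 0 < κ) (ψ φ φ' η₁ η₂ η₁' η₂' : ℝ → ℝ)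
    (hψc : ContinuousOn ψ (Set.Ici 0)) (hψ0 : ψ 0 ∈ Set.Icc 0 κ)
    -- first solution
    (hφ : ∀ t ≥ (0:ℝ), φ t = ψ t + η₁ t - η₂ t)
    (hφrange : ∀ t ≥ (0:ℝ), φ t ∈ Set.Icc 0 κ)
    (hη₁c : ContinuousOn η₁ (Set.Ici 0)) (hη₂c : ContinuousOn η₂ (Set.Ici 0))
    (hη₁m : MonotoneOn η₁ (Set.Ici 0)) (hη₂m : MonotoneOn η₂ (Set.Ici 0))
    (hη₁0 : η₁ 0 = 0) (hη₂0 : η₂ 0 = 0)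
    (hη₁supp : ∀ s t : ℝ, 0 ≤ s → s ≤ t → (∀ u ∈ Set.Icc s t, 0 < φ u) → η₁ s = η₁ t)
    (hη₂supp : ∀ s t : ℝ, 0 ≤ s → s ≤ t → (∀ u ∈ Set.Icc s t, φ u < κ) → η₂ s = η₂ t)
    -- second solution
    (hφ' : ∀ t ≥ (0:ℝ), φ' t = ψ t + η₁' t - η₂' t)
    (hφ'range : ∀ t ≥ (0:ℝ), φ' t ∈ Set.Icc 0 κ)
    (hη₁'c : ContinuousOn η₁' (Set.Ici 0)) (hη₂'c : ContinuousOn η₂' (Set.Ici 0))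
    (hη₁'m : MonotoneOn η₁' (Set.Ici 0)) (hη₂'m : MonotoneOn η₂' (Set.Ici 0))
    (hη₁'0 : η₁' 0 = 0) (hη₂'0 : η₂' 0 = 0)
    (hη₁'supp : ∀ s t : ℝ, 0 ≤ s → s ≤ t → (∀ u ∈ Set.Icc s t, 0 < φ' u) → η₁' s = η₁' t)
    (hη₂'supp : ∀ s t : ℝ, 0 ≤ s → s ≤ t → (∀ u ∈ Set.Icc s t, φ' u < κ) → η₂' s = η₂' t) :
    ∀ t ≥ (0:ℝ), φ t = φ' t ∧ η₁ t = η₁' t ∧ η₂ t = η₂' t :=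
  skorohod_unique_general κ hκ ψ φ φ' η₁ η₂ η₁' η₂' hψc hφ hφrange hη₁c hη₂c hη₁m hη₂m hη₁0 hη₂0
    hη₁supp hη₂supp hφ' hφ'range hη₁'c hη₂'c hη₁'m hη₂'m hη₁'0 hη₂'0 hη₁'supp hη₂'supp
end
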